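/- arXiv:2406.05418 — 2 statements merged into one kernel-verified Lean document; each statement's English description precedes it below -/
import Mathlib

section
/- Individual rationality for winning buyers in the double Dutch auction: Let C_B : ℕ → ℝ be a nonincreasing buyer clock and C_S : ℕ → ℝ a nondecreasing seller clock, let T ≥ 1 be the termination round, and assume the clocks have not crossed at round T − 1, i.e. C_S(T−1) ≤ C_B(T−1). Suppose buyer m with valuation v_m accepted the buyer clock at some round t₀ ≤ T − 1, so that its buy-bid is g_m = C_B(t₀) and C_B(t₀) ≤ v_m. Let the market clearing price be p* = α·C_B(T−1) + (1−α)·C_S(T−1) with α ∈ [0,1]. Then p* ≤ g_m ≤ v_m; in particular, the buyer's utility u_m = g_m − p* is nonnegative. -/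
/-- Individual rationality for winning buyers in the double Dutch auction:
a buyer who accepted the nonincreasing buyer clock at round `t₀ ≤ T − 1`
pays at most its buy-bid, which is at most its valuation, so its utility
`g_m − p*` is nonnegative. -/
theorem dda_buyer_individual_rationality
    (C_B C_S : ℕ → ℝ) (hB : Antitone C_B) (hS : Monotone C_S)
    (T : ℕ) (hT : 1 ≤ T)
    (hnocross : C_S (T - 1) ≤ C_B (T - 1))
    (v_m : ℝ) (t₀ : ℕ) (ht₀ : t₀ ≤ T - 1)
    (haccept : C_B t₀ ≤ v_m)
    (g_m : ℝ) (hg : g_m = C_B t₀)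
    (α : ℝ) (hα : α ∈ Set.Icc (0 : ℝ) 1)
    (pstar : ℝ) (hp : pstar = α * C_B (T - 1) + (1 - α) * C_S (T - 1)) :
    pstar ≤ g_m ∧ g_m ≤ v_m := by
  obtain ⟨hα0, hα1⟩ := hα
  have h1 : pstar ≤ C_B (T - 1) := by
    rw [hp]
    nlinarith
  have h2 : C_B (T - 1) ≤ C_B t₀ := hB ht₀
  exact ⟨by rw [hg]; linarith, by rw [hg]; exact haccept⟩
end

section
/- Individual rationality for winning sellers in the double Dutch auction: Let C_B : ℕ → ℝ be a nonincreasing buyer clock and C_S : ℕ → ℝ a nondecreasing seller clock, let T ≥ 1 be the termination round, and assume the clocks have not crossed at round T − 1, i.e. C_S(T−1) ≤ C_B(T−1). Suppose seller n with valuation v_n accepted the seller clock at some round t₀ ≤ T − 1, so that its sell-bid is k_n = C_S(t₀) and C_S(t₀) ≥ v_n. Let the market clearing price be p* = α·C_B(T−1) + (1−α)·C_S(T−1) with α ∈ [0,1]. Then v_n ≤ k_n ≤ p*; in particular, the seller's utility û_n = p* − k_n is nonnegative. -/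
/-- Individual rationality for winning sellers in the double Dutch auction:
a seller who accepted the nondecreasing seller clock at round `t₀ ≤ T − 1`
receives at least its sell-bid, which is at least its valuation, so its utility
`p* − k_n` is nonnegative. -/
theorem dda_seller_individual_rationality
    (C_B C_S : ℕ → ℝ) (hB : Antitone C_B) (hS : Monotone C_S)
    (T : ℕ) (hT : 1 ≤ T)
    (hnocross : C_S (T - 1) ≤ C_B (T - 1))
    (v_n : ℝ) (t₀ : ℕ) (ht₀ : t₀ ≤ T - 1)
    (haccept : v_n ≤ C_S t₀)
    (k_n : ℝ) (hk : k_n = C_S t₀)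
    (α : ℝ) (hα : α ∈ Set.Icc (0 : ℝ) 1)
    (pstar : ℝ) (hp : pstar = α * C_B (T - 1) + (1 - α) * C_S (T - 1)) :
    v_n ≤ k_n ∧ k_n ≤ pstar := by
  obtain ⟨h0, h1⟩ := hα
  have hS' : C_S t₀ ≤ C_S (T - 1) := hS ht₀
  have hmix : C_S (T - 1) ≤ pstar := by
    rw [hp]
    nlinarith
  exact ⟨hk ▸ haccept, hk ▸ le_trans hS' hmix⟩
end
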